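/- For every real s with 0 < s < 1, we have 2/(s-1)^3 + ∫₀¹ t^{-s} (log t)^2 / (1 - t) dt = ∑_{n=2}^∞ 2/(n - s)^3. -/

import Mathlib

/-!
Expand `1 / (1 - t) = ∑ tⁿ` and integrate term by term, which is legitimate because all terms
are nonnegative. With `a = n - s > -1`, the antiderivative
`t ^ (a + 1) * (log² t / (a + 1) - 2 log t / (a + 1)² + 2 / (a + 1)³)` vanishes at `0`, so
`∫₀¹ t ^ a log² t dt = 2 / (a + 1)³`. The term `n = 0` is `2 / (1 - s)³`, which cancels
`2 / (s - 1)³`.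
-/

open MeasureTheory Set Real Filter Topology

lemma tendsto_log_pow_mul_rpow_nhdsGT_zero (k : ℕ) {r : ℝ} (hr : 0 < r) :
    Tendsto (fun t => log t ^ k * t ^ r) (𝓝[>] 0) (𝓝 0) := by
  rw [tendsto_zero_iff_norm_tendsto_zero]
  refine (isLittleO_abs_log_rpow_rpow_nhdsGT_zero k (neg_lt_zero.2 hr)).tendsto_div_nhds_zero.congr'
    (eventually_mem_nhdsWithin.mono fun t (ht : 0 < t) => ?_)
  simp only
  rw [norm_mul, norm_pow, norm_of_nonneg (rpow_nonneg ht.le _), rpow_neg ht.le, div_inv_eq_mul,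
    rpow_natCast, Real.norm_eq_abs]

/-- At `0` the junk values `log 0 = 0` and `0 ^ r = 0` agree with the limit. -/
lemma continuousOn_log_pow_mul_rpow (k : ℕ) {r : ℝ} (hr : 0 < r) :
    ContinuousOn (fun t => log t ^ k * t ^ r) (Ici 0) := by
  intro t ht
  rcases (mem_Ici.1 ht).eq_or_lt with rfl | ht
  · rw [← continuousWithinAt_Ioi_iff_Ici, ContinuousWithinAt, zero_rpow hr.ne', mul_zero]
    exact tendsto_log_pow_mul_rpow_nhdsGT_zero k hr
  · exact (((continuousAt_log ht.ne').pow k).mul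
      (continuousAt_rpow_const _ _ (Or.inl ht.ne'))).continuousWithinAt

noncomputable def logSqRpowAntideriv (c t : ℝ) : ℝ :=
  log t ^ 2 * t ^ c / c - 2 * (log t * t ^ c) / c ^ 2 + 2 * t ^ c / c ^ 3

lemma hasDerivAt_logSqRpowAntideriv {c t : ℝ} (hc : c ≠ 0) (ht : 0 < t) :
    HasDerivAt (logSqRpowAntideriv c) (t ^ (c - 1) * log t ^ 2) t := by
  have hlog := hasDerivAt_log ht.ne'
  have hpow : HasDerivAt (fun t => t ^ c) (c * t ^ (c - 1)) t :=
    hasDerivAt_rpow_const (Or.inl ht.ne')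
  refine (((((hlog.fun_pow 2).mul hpow).div_const c).sub
    ((hlog.mul hpow).const_mul 2 |>.div_const (c ^ 2))).add
    (hpow.const_mul 2 |>.div_const (c ^ 3))).congr_deriv ?_
  rw [show t ^ c = t ^ (c - 1) * t by rw [← rpow_add_one ht.ne']; ring_nf]
  field_simp
  ring

lemma continuousOn_logSqRpowAntideriv {c : ℝ} (hc : 0 < c) :
    ContinuousOn (logSqRpowAntideriv c) (Ici 0) := by
  have h2 := continuousOn_log_pow_mul_rpow 2 hc
  have h1 := continuousOn_log_pow_mul_rpow 1 hc
  have h0 := continuousOn_log_pow_mul_rpow 0 hc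
  simp only [pow_one, pow_zero, one_mul] at h1 h0
  exact ((h2.div_const c).sub ((continuousOn_const.mul h1).div_const _)).add
    ((continuousOn_const.mul h0).div_const _)

lemma intervalIntegrable_rpow_mul_log_sq {a : ℝ} (ha : -1 < a) :
    IntervalIntegrable (fun t => t ^ a * log t ^ 2) volume 0 1 := by
  have hc : 0 < a + 1 := by linarith
  refine intervalIntegral.intervalIntegrable_deriv_of_nonneg (g := logSqRpowAntideriv (a + 1))
    ((continuousOn_logSqRpowAntideriv hc).mono ?_) (fun t ht => ?_) (fun t ht => ?_)
  · simp [Icc_subset_Ici_self]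
  · simpa using hasDerivAt_logSqRpowAntideriv hc.ne' (by simpa using ht.1)
  · exact mul_nonneg (rpow_nonneg (by simpa using ht.1.le) _) (sq_nonneg _)

lemma integral_rpow_mul_log_sq {a : ℝ} (ha : -1 < a) :
    ∫ t in (0 : ℝ)..1, t ^ a * log t ^ 2 = 2 / (a + 1) ^ 3 := by
  have hc : 0 < a + 1 := by linarith
  rw [intervalIntegral.integral_eq_sub_of_hasDerivAt_of_le zero_le_one
    ((continuousOn_logSqRpowAntideriv hc).mono Icc_subset_Ici_self)
    (fun t ht => by simpa using hasDerivAt_logSqRpowAntideriv hc.ne' ht.1)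
    (intervalIntegrable_rpow_mul_log_sq ha)]
  simp [logSqRpowAntideriv, zero_rpow hc.ne']

lemma summable_two_div_nat_add_one_sub_pow_three {s : ℝ} (hs : s < 1) :
    Summable fun n : ℕ => 2 / ((n : ℝ) + 1 - s) ^ 3 := by
  refine ((Real.summable_one_div_nat_add_rpow (1 - s) 3).2 (by norm_num)).mul_left 2
    |>.congr fun n => ?_
  have hpos : 0 < (n : ℝ) + (1 - s) := by positivity
  rw [abs_of_pos hpos, show (3 : ℝ) = (3 : ℕ) by norm_num, rpow_natCast, add_sub_assoc]
  ring

lemma hasSum_integral_rpow_mul_log_sq_div_one_sub {s : ℝ} (hs : s < 1) :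
    HasSum (fun n : ℕ => 2 / ((n : ℝ) + 1 - s) ^ 3)
      (∫ t in Ioo (0 : ℝ) 1, t ^ (-s) * log t ^ 2 / (1 - t)) := by
  set f : ℕ → ℝ → ℝ := fun n t => t ^ ((n : ℝ) - s) * log t ^ 2
  have hexp (n : ℕ) : -1 < (n : ℝ) - s := by linarith [(n.cast_nonneg : (0 : ℝ) ≤ n)]
  have hIoo (g : ℝ → ℝ) : ∫ t in Ioo (0 : ℝ) 1, g t = ∫ t in (0 : ℝ)..1, g t := by
    rw [intervalIntegral.integral_of_le zero_le_one, integral_Ioc_eq_integral_Ioo]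
  have hint (n : ℕ) : IntegrableOn (f n) (Ioo 0 1) :=
    (intervalIntegrable_iff_integrableOn_Ioo_of_le zero_le_one).1
      (intervalIntegrable_rpow_mul_log_sq (hexp n))
  have hval (n : ℕ) : ∫ t in Ioo (0 : ℝ) 1, f n t = 2 / ((n : ℝ) + 1 - s) ^ 3 := by
    rw [hIoo, integral_rpow_mul_log_sq (hexp n), sub_add_eq_add_sub]
  have hnorm (n : ℕ) : ∫ t in Ioo (0 : ℝ) 1, ‖f n t‖ = ∫ t in Ioo (0 : ℝ) 1, f n t :=
    setIntegral_congr_fun measurableSet_Ioo fun t ht =>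
      norm_of_nonneg (mul_nonneg (rpow_nonneg ht.1.le _) (sq_nonneg _))
  have hgeom : ∀ t ∈ Ioo (0 : ℝ) 1, ∑' n, f n t = t ^ (-s) * log t ^ 2 / (1 - t) := by
    intro t ⟨ht0, ht1⟩
    have hterm (n : ℕ) : f n t = t ^ (-s) * log t ^ 2 * t ^ n := by
      simp only [f, sub_eq_neg_add, rpow_add ht0, rpow_natCast]
      ring
    rw [tsum_congr hterm, tsum_mul_left, tsum_geometric_of_lt_one ht0.le ht1, div_eq_mul_inv]
  have := hasSum_integral_of_summable_integral_norm hint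
    ((summable_two_div_nat_add_one_sub_pow_three hs).congr fun n => by rw [hnorm, hval])
  simp only [hval] at this
  rwa [setIntegral_congr_fun measurableSet_Ioo hgeom] at this

theorem stmt_2_general (s : ℝ) (hs1 : s < 1) :
    2 / (s - 1)^3 + ∫ t in Set.Ioo (0:ℝ) 1, t ^ (-s) * (Real.log t)^2 / (1 - t) =
      ∑' n : ℕ, 2 / (((n : ℝ) + 2) - s)^3 := by
  have hsum := hasSum_integral_rpow_mul_log_sq_div_one_sub hs1
  rw [← hsum.tsum_eq, hsum.summable.tsum_eq_zero_add]
  push_cast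
  have hneg : (s - 1) ^ 3 = -(0 + 1 - s) ^ 3 := by ring
  rw [hneg, div_neg, neg_add_cancel_left]
  exact tsum_congr fun n => by ring_nf

theorem stmt_2 (s : ℝ) (hs : 0 < s) (hs1 : s < 1) :
    2 / (s - 1)^3 + ∫ t in Set.Ioo (0:ℝ) 1, t ^ (-s) * (Real.log t)^2 / (1 - t) =
      ∑' n : ℕ, 2 / (((n : ℝ) + 2) - s)^3 :=
  stmt_2_general s hs1
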